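/- arXiv:1710.06821 — 2 statements merged into one kernel-verified Lean document; each statement's English description precedes it below -/
import Mathlib

section
/- Let a ∈ ℤ and let f(x) = (x+a)^2 - a - 1 ∈ ℤ[x] be irreducible over ℚ. Then f^2(x) is irreducible over ℚ if and only if a ≠ -(2p^2-1)^2 for every p ∈ ℤ. -/
/-!
Shifting `x ↦ x - a` turns `f` into `X² - (a + 1)` and `f ∘ f` into the biquadratic
`X⁴ - 2X² - a`, so irreducibility of `f` says that `a + 1` is not a rational square.
A biquadratic `X⁴ + pX² + q` whose discriminant `p² - 4q` is not a square has no root, and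
comparing coefficients shows that any factorization into monic quadratics has the shape
`(X² + bX + c)(X² - bX + c)` with `c² = q`, `b² = 2c - p`. For `X⁴ - 2X² - a` such `c` and `b`
are integers because their squares are, so `b = 2k` is even, `c = 2k² - 1` and
`a = -c² = -(2k² - 1)²`.
-/

open Polynomial

noncomputable def iter {R : Type*} [CommRing R] (f : Polynomial R) : ℕ → Polynomial R
  | 0 => Polynomial.X
  | n + 1 => f.comp (iter f n)

namespace Polynomial

theorem irreducible_comp_X_add_C_iff {R : Type*} [CommRing R] (p : R[X]) (t : R) :
    Irreducible (p.comp (X + C t)) ↔ Irreducible p := by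
  simpa [← comp_eq_aeval] using
    MulEquiv.irreducible_iff (algEquivAevalXAddC t).toMulEquiv (x := p)

theorem Monic.eq_X_sq_add_C_mul_X_add_C {R : Type*} [CommSemiring R] {g : R[X]} (hg : g.Monic)
    (h2 : g.natDegree = 2) : g = X ^ 2 + C (g.coeff 1) * X + C (g.coeff 0) := by
  conv_lhs => rw [hg.as_sum, h2]
  simp only [Finset.sum_range_succ, Finset.range_one, Finset.sum_singleton, pow_zero, mul_one,
    pow_one]
  ring

section Biquadratic

variable {R : Type*} [CommRing R] {p q : R}

theorem monic_X_pow_four_add_C_mul_X_sq_add_C [Nontrivial R] :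
    (X ^ 4 + C p * X ^ 2 + C q).Monic := by
  monicity!

theorem natDegree_X_pow_four_add_C_mul_X_sq_add_C [Nontrivial R] :
    (X ^ 4 + C p * X ^ 2 + C q).natDegree = 4 := by
  compute_degree!

theorem X_pow_four_add_C_mul_X_sq_add_C_eq_mul {b c : R} (hc : c ^ 2 = q)
    (hb : b ^ 2 = 2 * c - p) :
    X ^ 4 + C p * X ^ 2 + C q = (X ^ 2 + C b * X + C c) * (X ^ 2 + C (-b) * X + C c) := by
  rw [← hc, show p = 2 * c - b ^ 2 by rw [hb]; ring]
  simp only [map_sub, map_neg, map_mul, map_pow, map_ofNat]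
  ring

theorem not_irreducible_X_pow_four_add_C_mul_X_sq_add_C [Nontrivial R] {b c : R} (hc : c ^ 2 = q)
    (hb : b ^ 2 = 2 * c - p) : ¬Irreducible (X ^ 4 + C p * X ^ 2 + C q) := by
  have hquad (b' : R) : ¬IsUnit (X ^ 2 + C b' * X + C c) := by
    have hmonic : (X ^ 2 + C b' * X + C c).Monic := by monicity!
    have hdeg : (X ^ 2 + C b' * X + C c).natDegree = 2 := by compute_degree!
    rw [hmonic.isUnit_iff]
    intro h
    simp [h] at hdeg
  rw [X_pow_four_add_C_mul_X_sq_add_C_eq_mul hc hb]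
  exact fun hirr => (hirr.isUnit_or_isUnit rfl).elim (hquad b) (hquad (-b))

theorem coeff_eq_of_mul_eq_X_pow_four_add_C_mul_X_sq_add_C {b c d e : R}
    (h : (X ^ 2 + C b * X + C c) * (X ^ 2 + C d * X + C e) = X ^ 4 + C p * X ^ 2 + C q) :
    b + d = 0 ∧ c + e + b * d = p ∧ b * e + c * d = 0 ∧ c * e = q := by
  have hexp : (X ^ 2 + C b * X + C c) * (X ^ 2 + C d * X + C e) = X ^ 4 + C (b + d) * X ^ 3 +
      C (c + e + b * d) * X ^ 2 + C (b * e + c * d) * X + C (c * e) := by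
    simp only [map_add, map_mul]
    ring
  rw [hexp] at h
  have h3 := congrArg (coeff · 3) h
  have h2 := congrArg (coeff · 2) h
  have h1 := congrArg (coeff · 1) h
  have h0 := congrArg (coeff · 0) h
  simp only [coeff_add, coeff_C_mul, coeff_X_pow, coeff_X, coeff_C] at h3 h2 h1 h0
  norm_num at h3 h2 h1 h0
  exact ⟨h3, h2, h1, h0⟩

theorem eval_X_pow_four_add_C_mul_X_sq_add_C_ne_zero (hdisc : ∀ s : R, s ^ 2 ≠ p ^ 2 - 4 * q)
    (r : R) : (X ^ 4 + C p * X ^ 2 + C q).eval r ≠ 0 := by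
  intro hroot
  simp only [eval_add, eval_mul, eval_pow, eval_X, eval_C] at hroot
  exact hdisc (2 * r ^ 2 + p) (by linear_combination 4 * hroot)

theorem mul_ne_X_pow_four_add_C_mul_X_sq_add_C [IsDomain R]
    (hdisc : ∀ s : R, s ^ 2 ≠ p ^ 2 - 4 * q)
    (hfac : ∀ b c : R, c ^ 2 = q → b ^ 2 ≠ 2 * c - p) (b c d e : R) :
    (X ^ 2 + C b * X + C c) * (X ^ 2 + C d * X + C e) ≠ X ^ 4 + C p * X ^ 2 + C q := by
  intro h
  obtain ⟨h3, h2, h1, h0⟩ := coeff_eq_of_mul_eq_X_pow_four_add_C_mul_X_sq_add_C h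
  obtain rfl : d = -b := by linear_combination h3
  rcases mul_eq_zero.mp (show b * (e - c) = 0 by linear_combination h1) with hb | hec
  · subst hb
    exact hdisc (c - e) (by linear_combination (c + e + p) * h2 - 4 * h0)
  · obtain rfl : c = e := by linear_combination -hec
    exact hfac b c (by linear_combination h0) (by linear_combination -h2)

theorem irreducible_X_pow_four_add_C_mul_X_sq_add_C [IsDomain R]
    (hdisc : ∀ s : R, s ^ 2 ≠ p ^ 2 - 4 * q)
    (hfac : ∀ b c : R, c ^ 2 = q → b ^ 2 ≠ 2 * c - p) :
    Irreducible (X ^ 4 + C p * X ^ 2 + C q) := by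
  rw [monic_X_pow_four_add_C_mul_X_sq_add_C.irreducible_iff_natDegree',
    natDegree_X_pow_four_add_C_mul_X_sq_add_C]
  refine ⟨fun h1 => by
    simpa [h1] using natDegree_X_pow_four_add_C_mul_X_sq_add_C (p := p) (q := q),
    fun g h hg hh hgh hdeg => ?_⟩
  simp only [Finset.mem_Ioc] at hdeg
  obtain hlin | hquad : h.natDegree = 1 ∨ h.natDegree = 2 := by omega
  · apply eval_X_pow_four_add_C_mul_X_sq_add_C_ne_zero hdisc (-h.coeff 0)
    rw [← hgh, hh.eq_X_add_C hlin]
    simp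
  · have hgquad : g.natDegree = 2 := by
      have := congrArg natDegree hgh
      rw [hg.natDegree_mul hh, natDegree_X_pow_four_add_C_mul_X_sq_add_C] at this
      omega
    rw [hg.eq_X_sq_add_C_mul_X_add_C hgquad, hh.eq_X_sq_add_C_mul_X_add_C hquad] at hgh
    exact mul_ne_X_pow_four_add_C_mul_X_sq_add_C hdisc hfac _ _ _ _ hgh

end Biquadratic

end Polynomial

theorem Rat.exists_intCast_eq_of_sq_eq_intCast {x : ℚ} {k : ℤ} (h : x ^ 2 = k) :
    ∃ m : ℤ, x = m := by
  have hden : x.den ^ 2 = 1 := by simpa [Rat.den_pow] using congrArg Rat.den h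
  exact ⟨x.num, ((Rat.den_eq_one_iff x).mp (by simpa using hden)).symm⟩

theorem exists_eq_neg_sq_two_mul_sq_sub_one_of_sq_eq {a : ℤ} {b c : ℚ} (hc : c ^ 2 = -a)
    (hb : b ^ 2 = 2 * c + 2) : ∃ p : ℤ, a = -(2 * p ^ 2 - 1) ^ 2 := by
  obtain ⟨n, rfl⟩ := Rat.exists_intCast_eq_of_sq_eq_intCast (k := -a) (by exact_mod_cast hc)
  obtain ⟨m, rfl⟩ :=
    Rat.exists_intCast_eq_of_sq_eq_intCast (k := 2 * n + 2) (by exact_mod_cast hb)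
  have hm : m ^ 2 = 2 * n + 2 := by exact_mod_cast hb
  have hn : n ^ 2 = -a := by exact_mod_cast hc
  have hm_sq_even : Even (m ^ 2) := ⟨n + 1, by linear_combination hm⟩
  obtain ⟨p, rfl⟩ : Even m := (Int.even_pow.mp hm_sq_even).1
  obtain rfl : n = 2 * p ^ 2 - 1 := by linarith
  exact ⟨p, by linear_combination hn⟩

/-- For irreducible `f(x) = (x+a)^2 - a - 1`, the second iterate is irreducible over ℚ
iff `a ≠ -(2p^2-1)^2` for every integer `p`. -/
theorem stmt5 (a : ℤ) (f : Polynomial ℚ)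
    (hf : f = (X + C (a : ℚ)) ^ 2 - C (a : ℚ) - 1) (hirr : Irreducible f) :
    Irreducible (iter f 2) ↔ ∀ p : ℤ, a ≠ -(2 * p ^ 2 - 1) ^ 2 := by
  have hiter : iter f 2 = (X ^ 4 + C (-2) * X ^ 2 + C (-(a : ℚ))).comp (X + C (a : ℚ)) := by
    simp only [iter, hf, sub_comp, add_comp, pow_comp, mul_comp, X_comp, C_comp, one_comp]
    simp only [map_neg, map_ofNat]
    ring
  have hsq : ∀ s : ℚ, s ^ 2 ≠ a + 1 := by
    have hf' : f = (X ^ 2 - C ((a : ℚ) + 1)).comp (X + C (a : ℚ)) := by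
      simp only [hf, sub_comp, pow_comp, X_comp, C_comp]
      simp only [map_add, map_one]
      ring
    rwa [hf', irreducible_comp_X_add_C_iff,
      X_pow_sub_C_irreducible_iff_of_prime Nat.prime_two] at hirr
  rw [hiter, irreducible_comp_X_add_C_iff]
  constructor
  · rintro hH p rfl
    exact not_irreducible_X_pow_four_add_C_mul_X_sq_add_C (b := 2 * (p : ℚ))
      (c := 2 * (p : ℚ) ^ 2 - 1) (by push_cast; ring) (by ring) hH
  · intro ha
    refine irreducible_X_pow_four_add_C_mul_X_sq_add_C (fun s hs => hsq (s / 2) ?_)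
      (fun b c hc hb => ?_)
    · linear_combination hs / 4
    · obtain ⟨p, hp⟩ :=
        exists_eq_neg_sq_two_mul_sq_sub_one_of_sq_eq hc (b := b) (by linear_combination hb)
      exact ha p hp
end

section
/- Let K be a field of characteristic ≠ 2 and f(x) ∈ K[x] a monic PCF quadratic polynomial with tail size t_f = 1 and orbit size o_f. Then f^n is irreducible over K for all n ≥ 1 if and only if f^(o_f) is irreducible over K. -/
open Polynomial

/-!
Write `f = (x - c)² + a` with `a = f(c)` and `aᵢ = fⁱ(c)`. Tail size one means that `a₁` is not
periodic while `a₂` is, with period `o - 1`; hence `f(a_o) = f(a₁)` with `a_o ≠ a₁`, that is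
`a_o = 2c - a₁`.

Choose `θ₀ = 0` and `θ_{k+1}` with `f(θ_{k+1}) = θ_k` in an algebraic closure, and put
`L_k = K(θ_k)`, so that `fᵏ` is irreducible iff `[L_k : K] = 2ᵏ`. Since `fᵒ = fᵐ ∘ fᵒ⁻ᵐ`, the
iterates up to `fᵒ` are irreducible; suppose `f, …, fⁿ` are irreducible with `n ≥ o`. Then each `L_k / L_{k-1}` (`k ≤ n`) is quadratic, generated by
`θ_k - c` whose square `θ_{k-1} - a₁` lies in `L_{k-1}`, and the norm of `b - θ_k` is
`f(b) - θ_{k-1}`. If `fⁿ⁺¹` were reducible, `θ_{n+1} ∈ L_n`, so `a₁ - θ_n` would be minus a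
square in `L_n`; taking norms `o - 1` times, `a_o - θ_k` is a square in `L_k` for `k = n + 1 - o`.
The conjugation `θ_k ↦ 2c - θ_k` of `L_k / L_{k-1}` turns it into `θ_k - a₁ = (θ_{k+1} - c)²`,
so `θ_{k+1} ∈ L_k`, against `[L_{k+1} : K] = 2^{k+1}`.
-/

open IntermediateField Module Function
open scoped algebraMap

section Iterates
variable {R : Type*} [CommRing R]

lemma iter_add (f : R[X]) (m n : ℕ) : iter f (m + n) = (iter f m).comp (iter f n) := by
  induction m with
  | zero => simp [iter]
  | succ m ih => rw [Nat.add_right_comm, iter, iter, ih, Polynomial.comp_assoc]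

lemma aeval_iter {A : Type*} [CommRing A] [Algebra R A] (f : R[X]) (n : ℕ) (x : A) :
    aeval x (iter f n) = (fun y => aeval y f)^[n] x := by
  induction n with
  | zero => simp [iter]
  | succ n ih => simp [iter, aeval_comp, ih, iterate_succ_apply']

variable [IsDomain R]

lemma natDegree_iter {f : R[X]} (hdeg : f.natDegree = 2) (n : ℕ) :
    (iter f n).natDegree = 2 ^ n := by
  induction n with
  | zero => simp [iter]
  | succ n ih => simp [iter, natDegree_comp, hdeg, ih, pow_succ, mul_comm]

lemma monic_iter {f : R[X]} (hm : f.Monic) (hdeg : f.natDegree = 2) (n : ℕ) :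
    (iter f n).Monic := by
  induction n with
  | zero => exact monic_X
  | succ n ih => exact hm.comp ih (by rw [natDegree_iter hdeg]; positivity)

end Iterates

section Composition
variable {K : Type*} [Field K]

lemma isUnit_of_isUnit_comp {p q : K[X]} (hq : q.natDegree ≠ 0) (h : IsUnit (p.comp q)) :
    IsUnit p := by
  have h0 := natDegree_eq_zero_of_isUnit h
  rw [natDegree_comp, mul_eq_zero] at h0
  obtain ⟨r, rfl⟩ := natDegree_eq_zero.mp (h0.resolve_right hq)
  simpa using h

lemma Irreducible.of_comp {p q : K[X]} (h : Irreducible (p.comp q)) (hq : q.natDegree ≠ 0) :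
    Irreducible p :=
  have : IsLocalHom (compRingHom q) := ⟨fun _ => isUnit_of_isUnit_comp hq⟩
  Irreducible.of_map (f := compRingHom q) h

end Composition

section Quadratic
variable {K : Type*} [Field K]

lemma eq_sq_add_of_monic_of_natDegree_eq_two {f : K[X]} (hm : f.Monic) (hdeg : f.natDegree = 2)
    {c : K} (hc : (derivative f).eval c = 0) : f = (X - C c) ^ 2 + C (f.eval c) := by
  have htaylor : taylor c f = X ^ 2 + C (f.eval c) := by
    have hmt : (taylor c f).Monic := by simpa [Monic, leadingCoeff_taylor] using hm
    rw [hmt.as_sum, natDegree_taylor, hdeg]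
    simp [Finset.sum_range_succ, taylor_coeff_zero, taylor_coeff_one, hc]
  have := congrArg (taylor (-c)) htaylor
  rw [taylor_taylor, neg_add_cancel, taylor_zero] at this
  rw [this]
  simp [sub_eq_add_neg]

lemma eq_two_mul_sub_of_eval_eq {f : K[X]} {c a : K} (hf : f = (X - C c) ^ 2 + C a) {x y : K}
    (h : f.eval x = f.eval y) (hne : x ≠ y) : x = 2 * c - y := by
  simp only [hf, eval_add, eval_pow, eval_sub, eval_X, eval_C, add_left_inj] at h
  have : (x - y) * (x + y - 2 * c) = 0 := by linear_combination h
  linear_combination (mul_eq_zero.mp this).resolve_left (sub_ne_zero.mpr hne)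

end Quadratic

section Orbit
variable {α : Type*} {g : α → α}

lemma ncard_range_iterate_of_mem_periodicPts {x : α} (hx : x ∈ periodicPts g) :
    (Set.range fun n => g^[n] x).ncard = minimalPeriod g x := by
  have hrange : (Set.range fun n => g^[n] x) =
      (fun n => g^[n] x) '' Set.Iio (minimalPeriod g x) := by
    refine subset_antisymm ?_ (Set.image_subset_range _ _)
    rintro _ ⟨n, rfl⟩
    exact ⟨n % minimalPeriod g x, Nat.mod_lt _ (minimalPeriod_pos_of_mem_periodicPts hx),
      iterate_mod_minimalPeriod_eq⟩
  rw [hrange, iterate_injOn_Iio_minimalPeriod.ncard_image]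
  simp

lemma forall_iterate_ne_iff_notMem_periodicPts {y : α} :
    (∀ j, 1 ≤ j → g^[j] y ≠ y) ↔ y ∉ periodicPts g := by
  simp only [mem_periodicPts, IsPeriodicPt, IsFixedPt]
  grind

lemma setOf_iterate_pos_eq_insert (c : α) :
    {y | ∃ i, 1 ≤ i ∧ g^[i] c = y} = insert (g c) (Set.range fun n => g^[n] (g (g c))) := by
  ext y
  simp only [Set.mem_ofPred_eq, Set.mem_insert_iff, Set.mem_range]
  constructor
  · rintro ⟨_ | _ | n, hi, rfl⟩
    · omega
    · exact Or.inl rfl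
    · exact Or.inr ⟨n, by simp only [iterate_succ_apply]⟩
  · rintro (rfl | ⟨n, rfl⟩)
    · exact ⟨1, le_rfl, rfl⟩
    · exact ⟨n + 2, by omega, by simp only [iterate_succ_apply]⟩

theorem orbit_of_ncard_tail_eq_one {c : α} {o : ℕ}
    (hcard : {y | ∃ i, 1 ≤ i ∧ g^[i] c = y}.ncard = o)
    (htail : {y | (∃ i, 1 ≤ i ∧ g^[i] c = y) ∧ ∀ j, 1 ≤ j → g^[j] y ≠ y}.ncard = 1) :
    2 ≤ o ∧ g^[o + 1] c = g^[2] c ∧ g^[o] c ≠ g c := by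
  simp only [forall_iterate_ne_iff_notMem_periodicPts] at htail
  rw [show {y | (∃ i, 1 ≤ i ∧ g^[i] c = y) ∧ y ∉ periodicPts g} =
      {y | ∃ i, 1 ≤ i ∧ g^[i] c = y} \ periodicPts g from rfl, setOf_iterate_pos_eq_insert] at htail
  have hperiodic : ∀ x ∈ periodicPts g, ∀ n, g^[n] x ∈ periodicPts g := fun x hx n => by
    obtain ⟨m, hm, hxm⟩ := mem_periodicPts.mp hx
    exact mk_mem_periodicPts hm (hxm.apply_iterate n)
  have h1 : g c ∉ periodicPts g := by
    intro hp
    have : insert (g c) (Set.range fun n => g^[n] (g (g c))) \ periodicPts g = ∅ := by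
      rw [Set.sdiff_eq_empty]
      rintro _ (rfl | ⟨n, rfl⟩)
      exacts [hp, hperiodic _ hp (n + 1)]
    simp [this] at htail
  have h2 : g (g c) ∈ periodicPts g := by
    by_contra hnp
    have hne : g c ≠ g (g c) := fun h => h1 (mk_mem_periodicPts one_pos h.symm)
    have hsub : {g c, g (g c)} ⊆ insert (g c) (Set.range fun n => g^[n] (g (g c))) \
        periodicPts g := by
      rintro _ (rfl | rfl)
      exacts [⟨Set.mem_insert _ _, h1⟩, ⟨Or.inr ⟨0, rfl⟩, hnp⟩]
    have := Set.ncard_le_ncard hsub (Set.finite_of_ncard_pos (by omega))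
    rw [Set.ncard_pair hne] at this
    omega
  set s := minimalPeriod g (g (g c))
  have hs : 0 < s := minimalPeriod_pos_of_mem_periodicPts h2
  have ho : o = s + 1 := by
    have hfin : (Set.range fun n => g^[n] (g (g c))).Finite :=
      Set.finite_of_ncard_pos (by rwa [ncard_range_iterate_of_mem_periodicPts h2])
    rw [← hcard, setOf_iterate_pos_eq_insert, Set.ncard_insert_of_notMem _ hfin,
      ncard_range_iterate_of_mem_periodicPts h2]
    rintro ⟨n, hn⟩
    exact h1 (hn ▸ hperiodic _ h2 n)
  subst ho
  refine ⟨by omega, ?_, fun h => h1 (mk_mem_periodicPts hs ?_)⟩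
  · rw [iterate_add_apply]
    exact iterate_minimalPeriod
  · rwa [iterate_succ_apply] at h

end Orbit

section QuadraticExtension
variable {Ω : Type*} [Field Ω]

lemma Subfield.eq_and_eq_of_add_mul_eq {E : Subfield Ω} {s : Ω} (hs : s ∉ E) {U V U' V' : Ω}
    (hU : U ∈ E) (hV : V ∈ E) (hU' : U' ∈ E) (hV' : V' ∈ E) (h : U + s * V = U' + s * V') :
    U = U' ∧ V = V' := by
  by_cases hVV : V = V'
  · subst hVV
    exact ⟨by linear_combination h, rfl⟩
  · refine absurd ?_ hs
    have hne : V - V' ≠ 0 := sub_ne_zero.mpr hVV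
    rw [show s = (U' - U) / (V - V') by field_simp; linear_combination h]
    exact div_mem (sub_mem hU' hU) (sub_mem hV hV')

lemma Subfield.sq_sub_mul_eq_of_sq_add_mul_eq {E : Subfield Ω} {s : Ω} (hs : s ∉ E)
    (hs2 : s ^ 2 ∈ E) {U V A B : Ω} (hU : U ∈ E) (hV : V ∈ E) (hA : A ∈ E) (hB : B ∈ E)
    (h : (U + s * V) ^ 2 = A + s * B) : (U - s * V) ^ 2 = A - s * B := by
  obtain ⟨hA', hB'⟩ := Subfield.eq_and_eq_of_add_mul_eq (U := U ^ 2 + s ^ 2 * V ^ 2)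
    (V := 2 * U * V) hs (add_mem (pow_mem hU 2) (mul_mem hs2 (pow_mem hV 2)))
    (mul_mem (mul_mem (ofNat_mem E 2) hU) hV) hA hB (by linear_combination h)
  linear_combination hA' - s * hB'

variable {K : Type*} [Field K] [Algebra K Ω]

lemma IntermediateField.exists_eq_add_mul_of_mem_adjoin_simple {E : IntermediateField K Ω}
    {t s γ : Ω} (ht : IsIntegral K t) (hts : t - s ∈ E) (hs2 : s ^ 2 ∈ E) (hγ : γ ∈ K⟮t⟯) :
    ∃ U ∈ E, ∃ V ∈ E, γ = U + s * V := by
  rw [← mem_toSubalgebra, adjoin_simple_toSubalgebra_of_isAlgebraic ht.isAlgebraic] at hγ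
  induction hγ using Algebra.adjoin_induction with
  | mem x hx =>
    rw [Set.mem_singleton_iff.mp hx]
    exact ⟨t - s, hts, 1, one_mem E, by ring⟩
  | algebraMap r => exact ⟨algebraMap K Ω r, E.algebraMap_mem r, 0, zero_mem E, by ring⟩
  | add x y _ _ hx hy =>
    obtain ⟨U, hU, V, hV, rfl⟩ := hx
    obtain ⟨U', hU', V', hV', rfl⟩ := hy
    exact ⟨U + U', add_mem hU hU', V + V', add_mem hV hV', by ring⟩
  | mul x y _ _ hx hy =>
    obtain ⟨U, hU, V, hV, rfl⟩ := hx
    obtain ⟨U', hU', V', hV', rfl⟩ := hy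
    exact ⟨U * U' + s ^ 2 * (V * V'), add_mem (mul_mem hU hU') (mul_mem hs2 (mul_mem hV hV')),
      U * V' + V * U', add_mem (mul_mem hU hV') (mul_mem hV hU'), by ring⟩

lemma IntermediateField.exists_sq_eq_sub_mul_of_sq_eq_add_mul {E : IntermediateField K Ω}
    {t s γ A B : Ω} (ht : IsIntegral K t) (hE : E ≤ K⟮t⟯) (hts : t - s ∈ E) (hs : s ∉ E)
    (hs2 : s ^ 2 ∈ E) (hγ : γ ∈ K⟮t⟯) (hA : A ∈ E) (hB : B ∈ E) (h : γ ^ 2 = A + s * B) :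
    ∃ w ∈ K⟮t⟯, γ * w ∈ E ∧ w ^ 2 = A - s * B := by
  obtain ⟨U, hU, V, hV, rfl⟩ := exists_eq_add_mul_of_mem_adjoin_simple ht hts hs2 hγ
  have hsF : s ∈ K⟮t⟯ := by
    simpa using sub_mem (mem_adjoin_simple_self K t) (hE hts)
  refine ⟨U - s * V, sub_mem (hE hU) (mul_mem hsF (hE hV)), ?_,
    Subfield.sq_sub_mul_eq_of_sq_add_mul_eq (E := E.toSubfield) hs hs2 hU hV hA hB h⟩
  rw [show (U + s * V) * (U - s * V) = U ^ 2 - s ^ 2 * V ^ 2 by ring]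
  exact sub_mem (pow_mem hU 2) (mul_mem hs2 (pow_mem hV 2))

lemma aeval_mem_adjoin_simple (p : K[X]) (x : Ω) : aeval x p ∈ K⟮x⟯ :=
  algebra_adjoin_le_adjoin K {x} (aeval_mem_adjoin_singleton K x)

lemma irreducible_iff_finrank_adjoin_eq {p : K[X]} (hp : p.Monic) {x : Ω} (hx : aeval x p = 0) :
    Irreducible p ↔ finrank K K⟮x⟯ = p.natDegree := by
  have hint : IsIntegral K x := ⟨p, hp, hx⟩
  rw [adjoin.finrank hint]
  constructor
  · intro hirr
    rw [minpoly.eq_of_irreducible_of_monic hirr hx hp]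
  · intro hdeg
    rw [eq_of_monic_of_dvd_of_natDegree_le (minpoly.monic hint) hp (minpoly.dvd K x hx) hdeg.ge]
    exact minpoly.irreducible hint

end QuadraticExtension

section QuadraticPreimages
variable {K Ω : Type*} [Field K] [Field Ω] [Algebra K Ω] {f : K[X]} {c a : K}

lemma sq_sub_eq_of_aeval_eq (hf : f = (X - C c) ^ 2 + C a) {x y : Ω} (hxy : aeval y f = x) :
    (y - c) ^ 2 = x - a := by
  rw [← hxy, hf]
  simp

variable [Algebra.IsAlgebraic K Ω]

lemma exists_conj_sq_of_aeval_eq (hf : f = (X - C c) ^ 2 + C a) {x y : Ω} (hxy : aeval y f = x)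
    (hy : y ∉ K⟮x⟯) {γ : Ω} (hγ : γ ∈ K⟮y⟯) {A B : K} (h : γ ^ 2 = A + (y - c) * B) :
    ∃ w ∈ K⟮y⟯, γ * w ∈ K⟮x⟯ ∧ w ^ 2 = A - (y - c) * B := by
  have hK : ∀ r : K, (r : Ω) ∈ K⟮x⟯ := fun r => IntermediateField.algebraMap_mem _ r
  refine exists_sq_eq_sub_mul_of_sq_eq_add_mul (Algebra.IsIntegral.isIntegral y)
    (adjoin_simple_le_iff.mpr (hxy ▸ aeval_mem_adjoin_simple f y)) (by simp [hK c])
    (fun hs => hy (by simpa using add_mem hs (hK c))) ?_ hγ (hK A) (hK B) h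
  rw [sq_sub_eq_of_aeval_eq hf hxy]
  exact sub_mem (mem_adjoin_simple_self K x) (hK a)

/-- `γ * w` is the norm of `γ` from `K(y)` to `K(x)`, and the norm of `b - y` is `f(b) - x`. -/
lemma exists_sq_eq_mul_sub_eval_of_sq_eq (hf : f = (X - C c) ^ 2 + C a) {x y : Ω}
    (hxy : aeval y f = x) (hy : y ∉ K⟮x⟯) {γ : Ω} (hγ : γ ∈ K⟮y⟯) {ε b : K}
    (h : γ ^ 2 = ε * (b - y)) : ∃ z ∈ K⟮x⟯, z ^ 2 = (ε : Ω) ^ 2 * ((f.eval b : K) - x) := by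
  obtain ⟨w, -, hzw, hw⟩ := exists_conj_sq_of_aeval_eq hf hxy hy hγ (A := ε * (b - c)) (B := -ε)
    (by rw [h]; push_cast; ring)
  refine ⟨γ * w, hzw, ?_⟩
  have hfb : ((f.eval b : K) : Ω) = (b - c) ^ 2 + a := by rw [hf]; simp
  rw [mul_pow, h, hw, hfb]
  push_cast
  linear_combination -(ε : Ω) ^ 2 * sq_sub_eq_of_aeval_eq hf hxy

lemma mem_adjoin_simple_of_sq_eq (hf : f = (X - C c) ^ 2 + C a) {x y z : Ω}
    (hxy : aeval y f = x) (hyz : aeval z f = y) (hy : y ∉ K⟮x⟯) {γ : Ω} (hγ : γ ∈ K⟮y⟯)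
    (h : γ ^ 2 = 2 * (c : Ω) - a - y) : z ∈ K⟮y⟯ := by
  obtain ⟨w, hw, -, hw2⟩ := exists_conj_sq_of_aeval_eq hf hxy hy hγ (A := c - a) (B := -1)
    (by rw [h]; push_cast; ring)
  have hc : (c : Ω) ∈ K⟮y⟯ := IntermediateField.algebraMap_mem _ c
  have : (z - c - w) * (z - c + w) = 0 := by
    push_cast at hw2
    linear_combination sq_sub_eq_of_aeval_eq hf hyz - hw2
  rcases mul_eq_zero.mp this with h0 | h0
  · rw [show z = c + w by linear_combination h0]
    exact add_mem hc hw
  · rw [show z = c - w by linear_combination h0]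
    exact sub_mem hc hw

end QuadraticPreimages

section BackwardOrbit
variable {K Ω : Type*} [Field K] [Field Ω] [Algebra K Ω] {f : K[X]} {θ : ℕ → Ω}

lemma exists_backward_orbit [IsAlgClosed Ω] {c a : K} (hf : f = (X - C c) ^ 2 + C a) :
    ∃ θ : ℕ → Ω, θ 0 = 0 ∧ ∀ k, aeval (θ (k + 1)) f = θ k := by
  have hsurj : ∀ y : Ω, ∃ x, aeval x f = y := fun y => by
    obtain ⟨r, hr⟩ := IsAlgClosed.exists_pow_nat_eq (y - a) two_pos
    exact ⟨r + c, by simp [hf, hr]⟩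
  choose pre hpre using hsurj
  exact ⟨fun k => pre^[k] 0, rfl, fun k => by simp only [iterate_succ_apply', hpre]⟩

lemma aeval_iter_backward_orbit (h0 : θ 0 = 0) (hθ : ∀ k, aeval (θ (k + 1)) f = θ k) (k : ℕ) :
    aeval (θ k) (iter f k) = 0 := by
  rw [aeval_iter]
  induction k with
  | zero => exact h0
  | succ k ih => rw [iterate_succ_apply, hθ, ih]

lemma adjoin_le_adjoin_succ (hθ : ∀ k, aeval (θ (k + 1)) f = θ k) (k : ℕ) :
    K⟮θ k⟯ ≤ K⟮θ (k + 1)⟯ :=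
  adjoin_simple_le_iff.mpr (hθ k ▸ aeval_mem_adjoin_simple f _)

lemma finrank_adjoin_backward_orbit (hm : f.Monic) (hdeg : f.natDegree = 2) (h0 : θ 0 = 0)
    (hθ : ∀ k, aeval (θ (k + 1)) f = θ k) {k : ℕ} (hk : Irreducible (iter f k)) :
    finrank K K⟮θ k⟯ = 2 ^ k := by
  rwa [← natDegree_iter hdeg k, ← irreducible_iff_finrank_adjoin_eq (monic_iter hm hdeg k)
    (aeval_iter_backward_orbit h0 hθ k)]

lemma notMem_adjoin_of_irreducible_iter (hm : f.Monic) (hdeg : f.natDegree = 2) (h0 : θ 0 = 0)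
    (hθ : ∀ k, aeval (θ (k + 1)) f = θ k) {k : ℕ} (hk : Irreducible (iter f k))
    (hk' : Irreducible (iter f (k + 1))) : θ (k + 1) ∉ K⟮θ k⟯ := by
  intro hmem
  have : FiniteDimensional K K⟮θ k⟯ :=
    adjoin.finiteDimensional ⟨_, monic_iter hm hdeg k, aeval_iter_backward_orbit h0 hθ k⟩
  have := finrank_le_of_le_right (adjoin_simple_le_iff.mpr hmem)
  rw [finrank_adjoin_backward_orbit hm hdeg h0 hθ hk,
    finrank_adjoin_backward_orbit hm hdeg h0 hθ hk', pow_succ] at this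
  linarith [Nat.one_le_two_pow (n := k)]

lemma irreducible_iter_succ_of_notMem_adjoin (hm : f.Monic) (hdeg : f.natDegree = 2)
    (h0 : θ 0 = 0) (hθ : ∀ k, aeval (θ (k + 1)) f = θ k) {k : ℕ} (hk : Irreducible (iter f k))
    (hnot : θ (k + 1) ∉ K⟮θ k⟯) : Irreducible (iter f (k + 1)) := by
  have hroot := aeval_iter_backward_orbit h0 hθ (k + 1)
  have hint : IsIntegral K (θ (k + 1)) := ⟨_, monic_iter hm hdeg (k + 1), hroot⟩
  have : FiniteDimensional K K⟮θ (k + 1)⟯ := adjoin.finiteDimensional hint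
  rw [irreducible_iff_finrank_adjoin_eq (monic_iter hm hdeg (k + 1)) hroot, natDegree_iter hdeg]
  have hle : finrank K K⟮θ (k + 1)⟯ ≤ 2 ^ (k + 1) := by
    rw [adjoin.finrank hint, ← natDegree_iter hdeg]
    exact natDegree_le_of_dvd (minpoly.dvd K _ hroot) (monic_iter hm hdeg _).ne_zero
  obtain ⟨e, he⟩ := finrank_dvd_of_le_right (adjoin_le_adjoin_succ hθ k)
  rw [finrank_adjoin_backward_orbit hm hdeg h0 hθ hk] at he
  have hne : finrank K K⟮θ k⟯ ≠ finrank K K⟮θ (k + 1)⟯ := fun heq =>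
    hnot (eq_of_le_of_finrank_eq (adjoin_le_adjoin_succ hθ k) heq ▸ mem_adjoin_simple_self K _)
  rw [finrank_adjoin_backward_orbit hm hdeg h0 hθ hk, he] at hne
  have hpos : 0 < finrank K K⟮θ (k + 1)⟯ := finrank_pos
  rw [he] at hle hpos
  rw [he, pow_succ]
  have : e ≤ 2 := Nat.le_of_mul_le_mul_left hle (by positivity)
  interval_cases e <;> simp_all

variable [Algebra.IsAlgebraic K Ω] {c a : K}

lemma exists_sq_eq_iterate_sub_of_sq_eq (hf : f = (X - C c) ^ 2 + C a)
    (hθ : ∀ k, aeval (θ (k + 1)) f = θ k) {k j : ℕ}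
    (hnot : ∀ i, k ≤ i → i < k + j → θ (i + 1) ∉ K⟮θ i⟯) {γ : Ω} (hγ : γ ∈ K⟮θ (k + j)⟯) {b : K}
    (h : γ ^ 2 = b - θ (k + j)) :
    ∃ z ∈ K⟮θ k⟯, z ^ 2 = ((fun x => f.eval x)^[j] b : K) - θ k := by
  induction j generalizing γ b with
  | zero => exact ⟨γ, hγ, h⟩
  | succ j ih =>
    obtain ⟨z, hz, hz2⟩ := exists_sq_eq_mul_sub_eval_of_sq_eq hf (hθ (k + j))
      (hnot (k + j) (by omega) (by omega)) hγ (ε := 1) (b := b)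
      (by rw [h, algebraMap.coe_one, one_mul]; rfl)
    rw [algebraMap.coe_one, one_pow, one_mul] at hz2
    rw [iterate_succ_apply]
    exact ih (fun i hi hij => hnot i hi (by omega)) hz hz2

theorem notMem_adjoin_of_iterate_eq (hf : f = (X - C c) ^ 2 + C a)
    (hθ : ∀ k, aeval (θ (k + 1)) f = θ k) {o n : ℕ} (ho : 2 ≤ o) (hon : o ≤ n)
    (hao : (fun x => f.eval x)^[o] c = 2 * c - a) (hnot : ∀ i < n, θ (i + 1) ∉ K⟮θ i⟯) :
    θ (n + 1) ∉ K⟮θ n⟯ := by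
  -- One norm step from `L_n` with `ε = -1`, then `p = o - 2` more down to `L_{m+1}`.
  obtain ⟨p, rfl⟩ : ∃ p, o = p + 2 := ⟨o - 2, by omega⟩
  obtain ⟨m, rfl⟩ : ∃ m, n = m + 1 + p + 1 := ⟨n - p - 2, by omega⟩
  intro hmem
  have hc : (c : Ω) ∈ K⟮θ (m + 1 + p + 1)⟯ := IntermediateField.algebraMap_mem _ c
  obtain ⟨z, hz, hz2⟩ := exists_sq_eq_mul_sub_eval_of_sq_eq hf (hθ (m + 1 + p))
    (hnot _ (by omega)) (sub_mem hmem hc) (ε := -1) (b := a)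
    (by rw [sq_sub_eq_of_aeval_eq hf (hθ _)]; push_cast; ring)
  rw [algebraMap.coe_neg, algebraMap.coe_one, neg_one_sq, one_mul] at hz2
  obtain ⟨w, hw, hw2⟩ := exists_sq_eq_iterate_sub_of_sq_eq hf hθ
    (fun i hi _ => hnot i (by omega)) hz hz2
  have hfa : f.eval c = a := by rw [hf]; simp
  have hpa : (fun x => f.eval x)^[p] (f.eval a) = 2 * c - a := by rw [← hao, ← hfa]; rfl
  rw [hpa] at hw2
  refine hnot (m + 1) (by omega)
    (mem_adjoin_simple_of_sq_eq hf (hθ m) (hθ (m + 1)) (hnot m (by omega)) hw ?_)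
  rw [hw2]
  simp [map_ofNat]

end BackwardOrbit

theorem irreducible_iter_succ_of_forall_le {K : Type*} [Field K] {f : K[X]} (hm : f.Monic)
    (hdeg : f.natDegree = 2) {c a : K} (hf : f = (X - C c) ^ 2 + C a) {o n : ℕ} (ho : 2 ≤ o)
    (hon : o ≤ n) (hao : (fun x => f.eval x)^[o] c = 2 * c - a)
    (hirr : ∀ m ≤ n, Irreducible (iter f m)) : Irreducible (iter f (n + 1)) := by
  obtain ⟨θ, h0, hθ⟩ := exists_backward_orbit (Ω := AlgebraicClosure K) hf
  refine irreducible_iter_succ_of_notMem_adjoin hm hdeg h0 hθ (hirr n le_rfl) ?_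
  exact notMem_adjoin_of_iterate_eq hf hθ ho hon hao fun i hi =>
    notMem_adjoin_of_irreducible_iter hm hdeg h0 hθ (hirr i hi.le) (hirr (i + 1) hi)

theorem stmt18_general {K : Type*} [Field K]
    (f : Polynomial K) (hm : f.Monic) (hdeg : f.natDegree = 2)
    (c : K) (hc : (Polynomial.derivative f).eval c = 0)
    (o : ℕ)
    (hcard : {y : K | ∃ i : ℕ, 1 ≤ i ∧ (fun x => f.eval x)^[i] c = y}.ncard = o)
    (htail : {y : K | (∃ i : ℕ, 1 ≤ i ∧ (fun x => f.eval x)^[i] c = y) ∧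
        ∀ j : ℕ, 1 ≤ j → (fun x => f.eval x)^[j] y ≠ y}.ncard = 1) :
    (∀ n : ℕ, 1 ≤ n → Irreducible (iter f n)) ↔ Irreducible (iter f o) := by
  obtain ⟨ho, hper, hne⟩ := orbit_of_ncard_tail_eq_one hcard htail
  have hf := eq_sq_add_of_monic_of_natDegree_eq_two hm hdeg hc
  have hao : (fun x => f.eval x)^[o] c = 2 * c - f.eval c := eq_two_mul_sub_of_eval_eq hf
    (by simpa only [iterate_succ_apply', iterate_zero_apply] using hper) hne
  refine ⟨fun h => h o (by omega), fun hirr n _ => ?_⟩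
  have hle_o : ∀ m ≤ o, Irreducible (iter f m) := fun m hmo => by
    rw [← Nat.add_sub_cancel' hmo, iter_add] at hirr
    exact hirr.of_comp (by rw [natDegree_iter hdeg]; positivity)
  have hall : ∀ n, ∀ m ≤ n, Irreducible (iter f m) := by
    intro n
    induction n with
    | zero => exact fun m hm0 => hle_o m (by omega)
    | succ n ih =>
      intro m hmn
      rcases Nat.lt_or_ge m (n + 1) with hlt | hge
      · exact ih m (by omega)
      obtain rfl : m = n + 1 := by omega
      rcases Nat.lt_or_ge n o with hno | hno
      · exact hle_o (n + 1) hno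
      · exact irreducible_iter_succ_of_forall_le hm hdeg hf ho hno hao ih
  exact hall n n le_rfl

/-- A monic PCF quadratic over a field of characteristic ≠ 2 with tail size 1 and orbit
size `o` has all iterates irreducible iff its `o`-th iterate is irreducible. -/
theorem stmt18 {K : Type*} [Field K] (hchar : (2 : K) ≠ 0)
    (f : Polynomial K) (hm : f.Monic) (hdeg : f.natDegree = 2)
    (c : K) (hc : (Polynomial.derivative f).eval c = 0)
    (o : ℕ)
    (hfin : {y : K | ∃ i : ℕ, 1 ≤ i ∧ (fun x => f.eval x)^[i] c = y}.Finite)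
    (hcard : {y : K | ∃ i : ℕ, 1 ≤ i ∧ (fun x => f.eval x)^[i] c = y}.ncard = o)
    (htail : {y : K | (∃ i : ℕ, 1 ≤ i ∧ (fun x => f.eval x)^[i] c = y) ∧
        ∀ j : ℕ, 1 ≤ j → (fun x => f.eval x)^[j] y ≠ y}.ncard = 1) :
    (∀ n : ℕ, 1 ≤ n → Irreducible (iter f n)) ↔ Irreducible (iter f o) :=
  stmt18_general f hm hdeg c hc o hcard htail
end
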